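/- arXiv:2207.11506 — 4 statements merged into one kernel-verified Lean document; each statement's English description precedes it below -/
import Mathlib

section
/- Let G be a graph with no matching of size k (i.e., ν(G) ≤ k−1) and maximum degree at most k−1. Then e(G) ≤ k² − k if k is odd, and e(G) ≤ k² − (3/2)k if k is even. -/
/-!
The Chvátal–Hanson bound `e(G) ≤ ν r + ⌊r/2⌋ ⌊ν / ⌈r/2⌉⌋` for `Δ(G) ≤ r` and `ν(G) = ν`
is proved by induction on the number of edges; at `r = ν = k - 1` it is the claimed bound.
If some vertex lies in every maximum matching, deleting its edges lowers `ν` by one and loses at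
most `r` edges. Otherwise Gallai's lemma says that two vertices missed by the same maximum matching
lie in different components. So either at most one non-isolated vertex is missed, and then all
edges live on at most `2ν + 1` vertices and counting degrees suffices; or the graph splits along a
component into two graphs whose matching numbers add up to at most `ν`.

For Gallai's lemma, let `M` miss `u` and `v` at minimal distance, and `w` be the neighbour of `u`
on a shortest path. Among the maximum matchings missing `w` take `N` sharing most edges with `M`.
Exchanging one edge along an `M`-`N` alternating path shows that every vertex other than `w`
missed by `N` is missed by `M`; counting missed vertices then shows that `N` misses `v`, which is
closer to `w` than to `u`.
-/

def IsMatchingSet {V : Type*} (G : SimpleGraph V) (M : Finset (Sym2 V)) : Prop :=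
  (∀ e ∈ M, e ∈ G.edgeSet) ∧ ∀ e ∈ M, ∀ f ∈ M, e ≠ f → ∀ v, v ∈ e → v ∉ f

open Finset SimpleGraph

section

variable {V : Type*}

section CoveredVerts

variable [DecidableEq V]

def coveredVerts (M : Finset (Sym2 V)) : Finset V := M.biUnion Sym2.toFinset

@[simp]
lemma mem_coveredVerts {M : Finset (Sym2 V)} {v : V} :
    v ∈ coveredVerts M ↔ ∃ e ∈ M, v ∈ e := by
  simp [coveredVerts]

lemma mem_coveredVerts_of_mem {M : Finset (Sym2 V)} {e : Sym2 V} {v : V} (he : e ∈ M)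
    (hv : v ∈ e) : v ∈ coveredVerts M :=
  mem_coveredVerts.2 ⟨e, he, hv⟩

lemma disjoint_of_disjoint_coveredVerts {M N : Finset (Sym2 V)}
    (h : Disjoint (coveredVerts M) (coveredVerts N)) : Disjoint M N :=
  Finset.disjoint_left.2 fun e heM heN => Finset.disjoint_left.1 h
    (mem_coveredVerts_of_mem heM e.out_fst_mem) (mem_coveredVerts_of_mem heN e.out_fst_mem)

lemma coveredVerts_mono {M N : Finset (Sym2 V)} (h : M ⊆ N) : coveredVerts M ⊆ coveredVerts N :=
  biUnion_subset_biUnion_of_subset_left _ h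

end CoveredVerts

namespace IsMatchingSet

variable {G H : SimpleGraph V} {M N : Finset (Sym2 V)} {e f : Sym2 V} {v : V}

lemma eq_of_mem_of_mem (hM : IsMatchingSet G M) (he : e ∈ M) (hf : f ∈ M) (hve : v ∈ e)
    (hvf : v ∈ f) : e = f := by
  by_contra hne
  exact hM.2 e he f hf hne v hve hvf

lemma subset (hM : IsMatchingSet G M) (hNM : N ⊆ M) : IsMatchingSet G N :=
  ⟨fun e he => hM.1 e (hNM he), fun e he f hf => hM.2 e (hNM he) f (hNM hf)⟩

lemma mono (hM : IsMatchingSet G M) (hGH : G ≤ H) : IsMatchingSet H M :=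
  ⟨fun e he => edgeSet_mono hGH (hM.1 e he), hM.2⟩

variable [DecidableEq V]

lemma mem_support (hM : IsMatchingSet G M) (hv : v ∈ coveredVerts M) : v ∈ G.support := by
  obtain ⟨e, he, hve⟩ := mem_coveredVerts.1 hv
  obtain ⟨w, rfl⟩ := Sym2.mem_iff_exists.1 hve
  exact ⟨w, hM.1 _ he⟩

lemma notMem_coveredVerts_of_deleteIncidenceSet (hM : IsMatchingSet (G.deleteIncidenceSet v) M) :
    v ∉ coveredVerts M := by
  intro hv
  obtain ⟨e, he, hve⟩ := mem_coveredVerts.1 hv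
  have := edgeSet_deleteIncidenceSet G v ▸ hM.1 e he
  exact this.2 ⟨this.1, hve⟩

lemma insert (hM : IsMatchingSet G M) {x y : V} (hxy : G.Adj x y) (hx : x ∉ coveredVerts M)
    (hy : y ∉ coveredVerts M) : IsMatchingSet G (insert s(x, y) M) := by
  have hfresh : ∀ g ∈ M, ∀ z ∈ s(x, y), z ∉ g := by
    rintro g hg z hz hzg
    rcases Sym2.mem_iff.1 hz with rfl | rfl
    · exact hx (mem_coveredVerts_of_mem hg hzg)
    · exact hy (mem_coveredVerts_of_mem hg hzg)
  refine ⟨?_, ?_⟩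
  · rintro e he
    rcases mem_insert.1 he with rfl | he
    · exact hxy
    · exact hM.1 e he
  · rintro e he f hf hef z hze hzf
    rcases mem_insert.1 he with rfl | he <;> rcases mem_insert.1 hf with rfl | hf
    · exact hef rfl
    · exact hfresh f hf z hze hzf
    · exact hfresh e he z hzf hze
    · exact hM.2 e he f hf hef z hze hzf

lemma union (hM : IsMatchingSet G M) (hN : IsMatchingSet G N)
    (hMN : Disjoint (coveredVerts M) (coveredVerts N)) : IsMatchingSet G (M ∪ N) := by
  have hsep : ∀ e ∈ M, ∀ f ∈ N, ∀ z ∈ e, z ∉ f := fun e he f hf z hze hzf =>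
    disjoint_left.1 hMN (mem_coveredVerts_of_mem he hze) (mem_coveredVerts_of_mem hf hzf)
  refine ⟨fun e he => (mem_union.1 he).elim (hM.1 e) (hN.1 e), ?_⟩
  rintro e he f hf hef z hze hzf
  rcases mem_union.1 he with he | he <;> rcases mem_union.1 hf with hf | hf
  · exact hM.2 e he f hf hef z hze hzf
  · exact hsep e he f hf z hze hzf
  · exact hsep f hf e he z hzf hze
  · exact hN.2 e he f hf hef z hze hzf

lemma card_coveredVerts (hM : IsMatchingSet G M) : #(coveredVerts M) = 2 * #M := by
  rw [coveredVerts, card_biUnion, sum_const_nat, mul_comm]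
  · intro e he
    exact Sym2.card_toFinset_of_not_isDiag e (G.not_isDiag_of_mem_edgeSet (hM.1 e he))
  · intro e he f hf hef
    simp only [Function.onFun, Finset.disjoint_left, Sym2.mem_toFinset]
    exact hM.2 e he f hf hef

end IsMatchingSet

namespace SimpleGraph

variable {G : SimpleGraph V}

def restrict (G : SimpleGraph V) (s : Set V) : SimpleGraph V where
  Adj x y := G.Adj x y ∧ x ∈ s ∧ y ∈ s
  symm := ⟨fun _ _ h => ⟨h.1.symm, h.2.2, h.2.1⟩⟩
  loopless := ⟨fun _ h => h.1.ne rfl⟩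

@[simp]
lemma restrict_adj {s : Set V} {x y : V} :
    (G.restrict s).Adj x y ↔ G.Adj x y ∧ x ∈ s ∧ y ∈ s :=
  Iff.rfl

instance [DecidableRel G.Adj] {s : Set V} [DecidablePred (· ∈ s)] :
    DecidableRel (G.restrict s).Adj :=
  fun _ _ => decidable_of_iff _ restrict_adj.symm

lemma restrict_le (s : Set V) : G.restrict s ≤ G := fun _ _ h => h.1

lemma restrict_sup_restrict_compl {s : Set V} (hs : ∀ x y, G.Adj x y → (x ∈ s ↔ y ∈ s)) :
    G.restrict s ⊔ G.restrict sᶜ = G := by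
  ext x y
  simp only [sup_adj, restrict_adj, Set.mem_compl_iff]
  refine ⟨fun h => h.elim And.left And.left, fun h => ?_⟩
  by_cases hx : x ∈ s
  · exact .inl ⟨h, hx, (hs x y h).1 hx⟩
  · exact .inr ⟨h, hx, mt (hs x y h).2 hx⟩

lemma disjoint_restrict_compl (s : Set V) : Disjoint (G.restrict s) (G.restrict sᶜ) :=
  disjoint_left.2 fun _ _ h h' => (restrict_adj.1 h').2.1 (restrict_adj.1 h).2.1

lemma card_edgeFinset_restrict_add_restrict_compl [DecidableEq V] [Fintype V]
    [DecidableRel G.Adj] {s : Set V} [DecidablePred (· ∈ s)]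
    (hs : ∀ x y, G.Adj x y → (x ∈ s ↔ y ∈ s)) :
    #(G.restrict s).edgeFinset + #(G.restrict sᶜ).edgeFinset = #G.edgeFinset := by
  rw [← card_union_of_disjoint (disjoint_edgeFinset.2 (disjoint_restrict_compl s))]
  congr 1
  ext e
  rw [mem_union, mem_edgeFinset, mem_edgeFinset, mem_edgeFinset, ← Set.mem_union, ← edgeSet_sup,
    restrict_sup_restrict_compl hs]

lemma card_edgeFinset_restrict_pos [Fintype V] [DecidableRel G.Adj] {s : Set V}
    [DecidablePred (· ∈ s)] (hs : ∀ x y, G.Adj x y → (x ∈ s ↔ y ∈ s)) {u : V}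
    (hu : u ∈ G.support) (hus : u ∈ s) : 0 < #(G.restrict s).edgeFinset := by
  obtain ⟨w, huw⟩ := hu
  have : 0 < (G.restrict s).degree u :=
    (degree_pos_iff_exists_adj _ _).2 ⟨w, huw, hus, (hs u w huw).1 hus⟩
  exact this.trans_le (degree_le_card_edgeFinset _ u)

end SimpleGraph

lemma IsMatchingSet.coveredVerts_subset_of_restrict [DecidableEq V] {G : SimpleGraph V}
    {M : Finset (Sym2 V)} {s : Set V} (hM : IsMatchingSet (G.restrict s) M) :
    ↑(coveredVerts M) ⊆ s := by
  intro v hv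
  obtain ⟨e, he, hve⟩ := mem_coveredVerts.1 hv
  obtain ⟨w, rfl⟩ := Sym2.mem_iff_exists.1 hve
  exact (hM.1 _ he).2.1

def IsMaximumMatching (G : SimpleGraph V) (M : Finset (Sym2 V)) : Prop :=
  IsMatchingSet G M ∧ ∀ N, IsMatchingSet G N → #N ≤ #M

lemma exists_isMaximumMatching [Finite V] (G : SimpleGraph V) :
    ∃ M, IsMaximumMatching G M := by
  classical
  have := Fintype.ofFinite V
  obtain ⟨M, hM, hmax⟩ := exists_max_image (univ.filter (IsMatchingSet G)) card
    ⟨∅, mem_filter.2 ⟨mem_univ _, by simp [IsMatchingSet]⟩⟩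
  exact ⟨M, (mem_filter.1 hM).2, fun N hN => hmax N (mem_filter.2 ⟨mem_univ _, hN⟩)⟩

namespace IsMaximumMatching

variable {G : SimpleGraph V} {M N : Finset (Sym2 V)}

lemma of_card_eq (hM : IsMaximumMatching G M) (hN : IsMatchingSet G N) (hcard : #N = #M) :
    IsMaximumMatching G N :=
  ⟨hN, hcard ▸ hM.2⟩

variable [DecidableEq V]

lemma mem_coveredVerts_of_adj (hM : IsMaximumMatching G M) {x y : V} (hxy : G.Adj x y)
    (hx : x ∉ coveredVerts M) : y ∈ coveredVerts M := by
  by_contra hy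
  have hxyM : s(x, y) ∉ M := fun h => hx (mem_coveredVerts_of_mem h (Sym2.mem_mk_left x y))
  have := hM.2 _ (hM.1.insert hxy hx hy)
  rw [card_insert_of_notMem hxyM] at this
  omega

lemma card_compl_coveredVerts [Fintype V] (hM : IsMaximumMatching G M) :
    #(coveredVerts M)ᶜ = Fintype.card V - 2 * #M := by
  rw [card_compl, hM.1.card_coveredVerts]

-- The new matching is `N - yz + xy`, where `xy ∈ M` and `yz ∈ N`.
lemma exists_card_inter_lt (hN : IsMaximumMatching G N) (hM : IsMatchingSet G M) {x : V}
    (hxM : x ∈ coveredVerts M) (hxN : x ∉ coveredVerts N) :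
    ∃ N', IsMaximumMatching G N' ∧ coveredVerts N' ⊆ insert x (coveredVerts N) ∧
      #(N ∩ M) < #(N' ∩ M) := by
  obtain ⟨e, heM, hxe⟩ := mem_coveredVerts.1 hxM
  obtain ⟨y, rfl⟩ := Sym2.mem_iff_exists.1 hxe
  have hxy : G.Adj x y := hM.1 _ heM
  obtain ⟨f, hfN, hyf⟩ := mem_coveredVerts.1 (hN.mem_coveredVerts_of_adj hxy hxN)
  have hxyN : s(x, y) ∉ N := fun h => hxN (mem_coveredVerts_of_mem h (Sym2.mem_mk_left x y))
  have hfM : f ∉ M := fun h =>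
    hxyN (hM.eq_of_mem_of_mem heM h (Sym2.mem_mk_right x y) hyf ▸ hfN)
  have hy : y ∉ coveredVerts (N.erase f) := by
    simp only [mem_coveredVerts, mem_erase, not_exists, not_and, and_imp]
    exact fun g hgf hgN hyg => hgf (hN.1.eq_of_mem_of_mem hgN hfN hyg hyf)
  have hx : x ∉ coveredVerts (N.erase f) := fun h =>
    hxN (coveredVerts_mono (erase_subset f N) h)
  refine ⟨insert s(x, y) (N.erase f), hN.of_card_eq ((hN.1.subset (erase_subset f N)).insert
    hxy hx hy) ?_, ?_, ?_⟩
  · rw [card_insert_of_notMem (fun h => hxyN (mem_of_mem_erase h)), card_erase_of_mem hfN,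
      Nat.sub_add_cancel (card_pos.2 ⟨f, hfN⟩)]
  · intro v hv
    obtain ⟨g, hg, hvg⟩ := mem_coveredVerts.1 hv
    rcases mem_insert.1 hg with rfl | hg
    · rcases Sym2.mem_iff.1 hvg with rfl | rfl
      · exact mem_insert_self _ _
      · exact mem_insert_of_mem (mem_coveredVerts_of_mem hfN hyf)
    · exact mem_insert_of_mem (mem_coveredVerts_of_mem (mem_of_mem_erase hg) hvg)
  · calc #(N ∩ M) < #(insert s(x, y) (N ∩ M)) :=
          card_lt_card (ssubset_insert fun h => hxyN (mem_inter.1 h).1)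
      _ ≤ #(insert s(x, y) (N.erase f) ∩ M) := by
          refine card_le_card (insert_subset (mem_inter.2 ⟨mem_insert_self _ _, heM⟩) ?_)
          intro g hg
          obtain ⟨hgN, hgM⟩ := mem_inter.1 hg
          have hgf : g ≠ f := fun h => hfM (h ▸ hgM)
          exact mem_inter.2 ⟨mem_insert_of_mem (mem_erase.2 ⟨hgf, hgN⟩), hgM⟩

/-- Gallai's lemma. -/
lemma not_reachable_of_forall_missed [Fintype V]
    (hD : ∀ w, ∃ N, IsMaximumMatching G N ∧ w ∉ coveredVerts N) (hM : IsMaximumMatching G M)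
    {u v : V} (huv : u ≠ v) (hu : u ∉ coveredVerts M) (hv : v ∉ coveredVerts M) :
    ¬ G.Reachable u v := by
  classical
  intro hreach
  induction hd : G.dist u v using Nat.strong_induction_on generalizing M u v with
  | _ d ih =>
  obtain ⟨p, hp⟩ := hreach.exists_walk_length_eq_dist
  cases p with
  | nil => exact huv rfl
  | @cons _ w _ huw q =>
  obtain ⟨N, hNmem, hNmax⟩ := exists_max_image
    (univ.filter fun N => IsMaximumMatching G N ∧ w ∉ coveredVerts N) (fun N => #(N ∩ M))
    (let ⟨N, hN⟩ := hD w; ⟨N, mem_filter.2 ⟨mem_univ _, hN⟩⟩)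
  obtain ⟨hN, hwN⟩ := (mem_filter.1 hNmem).2
  have huN : u ∈ coveredVerts N := hN.mem_coveredVerts_of_adj huw.symm hwN
  have hsub : (coveredVerts N)ᶜ.erase w ⊆ (coveredVerts M)ᶜ.erase u := by
    intro x hx
    obtain ⟨hxw, hxN⟩ := mem_erase.1 hx
    rw [mem_compl] at hxN
    refine mem_erase.2 ⟨fun h => hxN (h ▸ huN), mem_compl.2 fun hxM => ?_⟩
    obtain ⟨N', hN', hcov, hlt⟩ := hN.exists_card_inter_lt hM.1 hxM hxN
    have hwN' : w ∉ coveredVerts N' := fun h =>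
      (mem_insert.1 (hcov h)).elim (fun h => hxw h.symm) hwN
    exact absurd (hNmax N' (mem_filter.2 ⟨mem_univ _, hN', hwN'⟩)) (not_le.2 hlt)
  have hcard : #((coveredVerts M)ᶜ.erase u) ≤ #((coveredVerts N)ᶜ.erase w) := by
    rw [card_erase_of_mem (mem_compl.2 hu), card_erase_of_mem (mem_compl.2 hwN),
      hM.card_compl_coveredVerts, hN.card_compl_coveredVerts,
      le_antisymm (hM.2 N hN.1) (hN.2 M hM.1)]
  have hvN : v ∈ (coveredVerts N)ᶜ.erase w :=
    eq_of_subset_of_card_le hsub hcard ▸ mem_erase.2 ⟨huv.symm, mem_compl.2 hv⟩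
  obtain ⟨hvw, hvN⟩ := mem_erase.1 hvN
  have hdist : G.dist w v < d := by
    have := dist_le q
    simp only [Walk.length_cons] at hp
    omega
  exact ih _ hdist hN (Ne.symm hvw) hwN (mem_compl.1 hvN) q.reachable rfl

end IsMaximumMatching

def chvatalHansonBound (r ν : ℕ) : ℕ := ν * r + r / 2 * (ν / ((r + 1) / 2))

lemma chvatalHansonBound_add_le (r a b : ℕ) :
    chvatalHansonBound r a + chvatalHansonBound r b ≤ chvatalHansonBound r (a + b) := by
  have := Nat.mul_le_mul_left (r / 2)
    (Nat.div_add_div_le_add_div (x := a) (y := b) (z := (r + 1) / 2))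
  simp only [chvatalHansonBound]
  nlinarith

lemma chvatalHansonBound_mono (r : ℕ) : Monotone (chvatalHansonBound r) := by
  intro a b hab
  obtain ⟨c, rfl⟩ := Nat.exists_eq_add_of_le hab
  exact (Nat.le_add_right _ _).trans (chvatalHansonBound_add_le r a c)

lemma add_le_chvatalHansonBound_succ (r ν : ℕ) :
    chvatalHansonBound r ν + r ≤ chvatalHansonBound r (ν + 1) :=
  calc chvatalHansonBound r ν + r ≤ chvatalHansonBound r ν + chvatalHansonBound r 1 := by
        simp [chvatalHansonBound]
    _ ≤ _ := chvatalHansonBound_add_le r ν 1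

lemma le_chvatalHansonBound {r ν n m : ℕ} (hn : n ≤ 2 * ν + 1) (hr : 2 * m ≤ n * r)
    (hn' : 2 * m ≤ n * (n - 1)) : m ≤ chvatalHansonBound r ν := by
  unfold chvatalHansonBound
  rcases le_or_gt (2 * ν + 1) r with hsmall | hlarge
  · have hpairs : n * (n - 1) ≤ 2 * (ν * (2 * ν + 1)) :=
      (Nat.mul_le_mul hn (Nat.sub_le_of_le_add hn)).trans_eq (by ring)
    have := Nat.mul_le_mul_left ν hsmall
    omega
  · rcases Nat.eq_zero_or_pos r with rfl | hr0
    · simp_all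
    · have hq : 1 ≤ ν / ((r + 1) / 2) := (Nat.one_le_div_iff (by omega)).2 (by omega)
      have hdeg : 2 * m ≤ 2 * (ν * r) + r :=
        (hr.trans (Nat.mul_le_mul_right r hn)).trans_eq (by ring)
      have := Nat.le_mul_of_pos_right (r / 2) hq
      omega

lemma chvatalHansonBound_of_odd {k : ℕ} (hk : Odd k) :
    chvatalHansonBound (k - 1) (k - 1) = k ^ 2 - k := by
  obtain ⟨t, rfl⟩ := hk
  rcases Nat.eq_zero_or_pos t with rfl | ht
  · simp [chvatalHansonBound]
  · have : 2 * t / t = 2 := Nat.mul_div_cancel _ ht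
    simp only [chvatalHansonBound, Nat.add_sub_cancel, show (2 * t + 1) / 2 = t by omega,
      show 2 * t / 2 = t by omega, this]
    rw [Nat.sub_eq_of_eq_add]
    ring

lemma chvatalHansonBound_of_even {k : ℕ} (hk : Even k) :
    chvatalHansonBound (k - 1) (k - 1) = k ^ 2 - 3 * k / 2 := by
  obtain ⟨t, rfl⟩ := hk
  rcases Nat.eq_zero_or_pos t with rfl | ht
  · simp [chvatalHansonBound]
  · obtain ⟨s, rfl⟩ := Nat.exists_eq_add_of_le' ht
    have : (2 * s + 1) / (s + 1) = 1 := Nat.div_eq_of_lt_le (by omega) (by omega)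
    simp only [chvatalHansonBound, show s + 1 + (s + 1) - 1 = 2 * s + 1 by omega,
      show (2 * s + 1 + 1) / 2 = s + 1 by omega, show (2 * s + 1) / 2 = s by omega, this]
    rw [show 3 * (s + 1 + (s + 1)) / 2 = 3 * s + 3 by omega, Nat.sub_eq_of_eq_add]
    ring

section Bound

variable [Fintype V] [DecidableEq V] {G : SimpleGraph V} [DecidableRel G.Adj] {r : ℕ}
  {M : Finset (Sym2 V)}

lemma degree_le_card_support_sub_one {v : V} (hv : v ∈ G.support) :
    G.degree v ≤ #G.support.toFinset - 1 := by
  rw [← card_neighborFinset_eq_degree, ← card_erase_of_mem (Set.mem_toFinset.2 hv)]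
  refine card_le_card fun w hw => ?_
  rw [mem_neighborFinset] at hw
  exact mem_erase.2 ⟨hw.ne', Set.mem_toFinset.2 ⟨v, hw.symm⟩⟩

lemma card_edgeFinset_le_of_card_support_le (hΔ : ∀ v, G.degree v ≤ r) {ν : ℕ}
    (hsupp : #G.support.toFinset ≤ 2 * ν + 1) : #G.edgeFinset ≤ chvatalHansonBound r ν := by
  refine le_chvatalHansonBound hsupp ?_ ?_ <;> rw [← sum_degrees_support_eq_twice_card_edges]
  · exact sum_le_card_nsmul _ _ _ fun v _ => hΔ v
  · exact sum_le_card_nsmul _ _ _ fun v hv =>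
      degree_le_card_support_sub_one (Set.mem_toFinset.1 hv)

lemma card_edgeFinset_le_of_deleteIncidenceSet (hM : IsMaximumMatching G M) {v : V}
    (hv : ∀ N, IsMaximumMatching G N → v ∈ coveredVerts N) (hΔ : G.degree v ≤ r)
    (hdel : ∀ M', IsMaximumMatching (G.deleteIncidenceSet v) M' →
      #(G.deleteIncidenceSet v).edgeFinset ≤ chvatalHansonBound r #M') :
    #G.edgeFinset ≤ chvatalHansonBound r #M := by
  obtain ⟨M', hM'⟩ := exists_isMaximumMatching (G.deleteIncidenceSet v)
  have hM'G : IsMatchingSet G M' := hM'.1.mono (deleteIncidenceSet_le G v)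
  have hlt : #M' < #M := by
    refine lt_of_le_of_ne (hM.2 M' hM'G) fun h => ?_
    exact hM'.1.notMem_coveredVerts_of_deleteIncidenceSet (hv M' (hM.of_card_eq hM'G h))
  calc #G.edgeFinset = #(G.deleteIncidenceSet v).edgeFinset + G.degree v := by
        rw [card_edgeFinset_deleteIncidenceSet,
          Nat.sub_add_cancel (G.degree_le_card_edgeFinset v)]
    _ ≤ chvatalHansonBound r #M' + r := Nat.add_le_add (hdel M' hM') hΔ
    _ ≤ chvatalHansonBound r (#M' + 1) := add_le_chvatalHansonBound_succ r #M'
    _ ≤ chvatalHansonBound r #M := chvatalHansonBound_mono r hlt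

lemma card_edgeFinset_le_of_restrict (hM : IsMaximumMatching G M) {s : Set V}
    [DecidablePred (· ∈ s)] (hs : ∀ x y, G.Adj x y → (x ∈ s ↔ y ∈ s))
    (hin : ∀ M₁, IsMaximumMatching (G.restrict s) M₁ →
      #(G.restrict s).edgeFinset ≤ chvatalHansonBound r #M₁)
    (hout : ∀ M₂, IsMaximumMatching (G.restrict sᶜ) M₂ →
      #(G.restrict sᶜ).edgeFinset ≤ chvatalHansonBound r #M₂) :
    #G.edgeFinset ≤ chvatalHansonBound r #M := by
  obtain ⟨M₁, hM₁⟩ := exists_isMaximumMatching (G.restrict s)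
  obtain ⟨M₂, hM₂⟩ := exists_isMaximumMatching (G.restrict sᶜ)
  have hdisj : Disjoint (coveredVerts M₁) (coveredVerts M₂) := by
    rw [← Finset.disjoint_coe]
    exact Set.disjoint_of_subset hM₁.1.coveredVerts_subset_of_restrict
      hM₂.1.coveredVerts_subset_of_restrict (disjoint_compl_right (a := s))
  have hcard : #M₁ + #M₂ ≤ #M := by
    rw [← card_union_of_disjoint (disjoint_of_disjoint_coveredVerts hdisj)]
    exact hM.2 _ ((hM₁.1.mono (restrict_le s)).union (hM₂.1.mono (restrict_le sᶜ)) hdisj)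
  calc #G.edgeFinset = #(G.restrict s).edgeFinset + #(G.restrict sᶜ).edgeFinset :=
        (card_edgeFinset_restrict_add_restrict_compl hs).symm
    _ ≤ chvatalHansonBound r #M₁ + chvatalHansonBound r #M₂ :=
        Nat.add_le_add (hin M₁ hM₁) (hout M₂ hM₂)
    _ ≤ chvatalHansonBound r #M :=
        (chvatalHansonBound_add_le r _ _).trans (chvatalHansonBound_mono r hcard)

theorem card_edgeFinset_le_chvatalHansonBound (G : SimpleGraph V) [DecidableRel G.Adj]
    (hΔ : ∀ v, G.degree v ≤ r) (hM : IsMaximumMatching G M) :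
    #G.edgeFinset ≤ chvatalHansonBound r #M := by
  induction hn : #G.edgeFinset using Nat.strong_induction_on generalizing G M with
  | _ n ih =>
  subst hn
  have hΔsub : ∀ (H : SimpleGraph V) [DecidableRel H.Adj], H ≤ G → ∀ v, H.degree v ≤ r :=
    fun H _ hH v => (degree_le_of_le hH).trans (hΔ v)
  by_cases hcovered : ∃ v, ∀ N, IsMaximumMatching G N → v ∈ coveredVerts N
  · obtain ⟨v, hv⟩ := hcovered
    have hpos : 0 < G.degree v :=
      (G.degree_pos_iff_mem_support v).2 (hM.1.mem_support (hv M hM))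
    refine card_edgeFinset_le_of_deleteIncidenceSet hM hv (hΔ v) fun M' hM' => ?_
    refine ih _ ?_ _ (hΔsub _ (deleteIncidenceSet_le G v)) hM' rfl
    rw [card_edgeFinset_deleteIncidenceSet]
    exact Nat.sub_lt (hpos.trans_le (G.degree_le_card_edgeFinset v)) hpos
  push Not at hcovered
  by_cases hmissed : #(G.support.toFinset \ coveredVerts M) ≤ 1
  · refine card_edgeFinset_le_of_card_support_le hΔ ?_
    have := card_le_card_sdiff_add_card (s := G.support.toFinset) (t := coveredVerts M)
    rw [hM.1.card_coveredVerts] at this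
    omega
  obtain ⟨u, hu, v, hv, huv⟩ := one_lt_card.1 (not_le.1 hmissed)
  simp only [mem_sdiff, Set.mem_toFinset] at hu hv
  let s : Set V := {x | G.Reachable u x}
  have hs : ∀ x y, G.Adj x y → (x ∈ s ↔ y ∈ s) := fun x y hxy =>
    ⟨fun hx => hx.trans hxy.reachable, fun hy => hy.trans hxy.symm.reachable⟩
  have hvs : v ∉ s := hM.not_reachable_of_forall_missed hcovered huv hu.2 hv.2
  have hsum := card_edgeFinset_restrict_add_restrict_compl hs
  have hpos_in := card_edgeFinset_restrict_pos hs hu.1 (Reachable.refl u)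
  have hpos_out := card_edgeFinset_restrict_pos (s := sᶜ) (fun x y hxy => not_congr (hs x y hxy))
    hv.1 hvs
  exact card_edgeFinset_le_of_restrict hM hs
    (fun M₁ hM₁ => ih _ (by omega) _ (hΔsub _ (restrict_le s)) hM₁ rfl)
    (fun M₂ hM₂ => ih _ (by omega) _ (hΔsub _ (restrict_le sᶜ)) hM₂ rfl)

end Bound

end

theorem abbott_hanson_sauer {V : Type*} [Fintype V] [DecidableEq V] (G : SimpleGraph V)
    [DecidableRel G.Adj] (k : ℕ)
    (hν : ∀ M : Finset (Sym2 V), IsMatchingSet G M → M.card ≤ k - 1)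
    (hΔ : ∀ v : V, G.degree v ≤ k - 1) :
    (Odd k → G.edgeFinset.card ≤ k ^ 2 - k) ∧
    (Even k → G.edgeFinset.card ≤ k ^ 2 - 3 * k / 2) := by
  obtain ⟨M, hM⟩ := exists_isMaximumMatching G
  have hbound : #G.edgeFinset ≤ chvatalHansonBound (k - 1) (k - 1) :=
    (card_edgeFinset_le_chvatalHansonBound G hΔ hM).trans
      (chvatalHansonBound_mono _ (hν M hM.1))
  exact ⟨fun hk => chvatalHansonBound_of_odd hk ▸ hbound,
    fun hk => chvatalHansonBound_of_even hk ▸ hbound⟩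
end

section
/- Let T be a finite tree with bipartition (A, B) such that every vertex of A has degree at least 2. Then T has a matching saturating A; in particular ν(T) = |A|. -/
/-!
Root the tree at a vertex `r`. Two neighbours of a vertex `v` that are both closer to `r` than `v`
coincide (both are the penultimate vertex of the unique path from `r` to `v`), so a vertex of
degree at least `2` has a neighbour farther from `r`, and a vertex is the farther neighbour of at
most one vertex. Matching every `a ∈ A` to such a neighbour saturates `A`; conversely `A` meets
every edge, so no matching has more than `|A|` edges.
-/

open Finset

namespace SimpleGraph

variable {V : Type*} {G : SimpleGraph V}

theorem IsAcyclic.eq_of_adj_of_dist_lt (hG : G.IsAcyclic) {r v u₁ u₂ : V} (hr : G.Reachable r v)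
    (h₁ : G.Adj v u₁) (h₂ : G.Adj v u₂) (hd₁ : G.dist r u₁ < G.dist r v)
    (hd₂ : G.dist r u₂ < G.dist r v) : u₁ = u₂ := by
  classical
  obtain ⟨p, hp, -⟩ := hr.exists_path_of_dist
  suffices ∀ u, G.Adj v u → G.dist r u < G.dist r v → u = p.penultimate from
    (this u₁ h₁ hd₁).trans (this u₂ h₂ hd₂).symm
  intro u hvu hd
  obtain ⟨q, hq, hql⟩ := (hr.trans hvu.reachable).exists_path_of_dist
  have hv : v ∉ q.support := fun hv => by
    have := (dist_le (q.takeUntil v hv)).trans (q.length_takeUntil_le_length hv)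
    omega
  exact hG.eq_penultimate_of_adj_end hp hvu
    (hG.mem_support_of_ne_mem_support_of_adj_of_isPath hp hq hvu hv)

theorem IsTree.exists_adj_dist_lt_of_one_lt_degree (hG : G.IsTree) (r : V) {v : V}
    [Fintype (G.neighborSet v)] (hv : 1 < G.degree v) :
    ∃ c, G.Adj v c ∧ G.dist r v < G.dist r c := by
  obtain ⟨c₁, h₁, c₂, h₂, hne⟩ := Finset.one_lt_card.1 hv
  rw [mem_neighborFinset] at h₁ h₂
  by_contra! hfar
  have hd : ∀ c, G.Adj v c → G.dist r c < G.dist r v := fun c hc =>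
    (hfar c hc).lt_of_ne (hG.dist_ne_of_adj r hc).symm
  exact hne (hG.isAcyclic.eq_of_adj_of_dist_lt (hG.connected r v) h₁ h₂ (hd c₁ h₁) (hd c₂ h₂))

theorem IsTree.exists_injOn_adj_of_one_lt_degree (hG : G.IsTree) [G.LocallyFinite] :
    ∃ f : V → V, (∀ v, 1 < G.degree v → G.Adj v (f v)) ∧
      Set.InjOn f {v | 1 < G.degree v} := by
  obtain ⟨r⟩ := hG.connected.nonempty
  have (v : V) : ∃ c, 1 < G.degree v → G.Adj v c ∧ G.dist r v < G.dist r c := by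
    by_cases hv : 1 < G.degree v
    · obtain ⟨c, hc⟩ := hG.exists_adj_dist_lt_of_one_lt_degree r hv
      exact ⟨c, fun _ => hc⟩
    · exact ⟨v, fun h => absurd h hv⟩
  choose f hf using this
  refine ⟨f, fun v hv => (hf v hv).1, fun v hv w hw hvw => ?_⟩
  obtain ⟨hvf, hdv⟩ := hf v hv
  obtain ⟨hwf, hdw⟩ := hf w hw
  rw [← hvw] at hwf hdw
  exact hG.isAcyclic.eq_of_adj_of_dist_lt (hG.connected r _) hvf.symm hwf.symm hdv hdw

end SimpleGraph

section Matching

variable {V : Type*} [DecidableEq V] {A : Finset V} {f : V → V}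

theorem card_image_sym2_mk_of_forall_notMem (hfA : ∀ a ∈ A, f a ∉ A) :
    (A.image fun a => s(a, f a)).card = A.card := by
  refine card_image_of_injOn fun a ha b hb hab => ?_
  rcases Sym2.eq_iff.1 hab with ⟨h, -⟩ | ⟨h, -⟩
  · exact h
  · exact absurd (h ▸ ha) (hfA b hb)

theorem isMatchingSet_image_sym2_mk_of_injOn {G : SimpleGraph V} (hadj : ∀ a ∈ A, G.Adj a (f a))
    (hfA : ∀ a ∈ A, f a ∉ A) (hf : Set.InjOn f A) :
    IsMatchingSet G (A.image fun a => s(a, f a)) := by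
  simp only [IsMatchingSet, mem_image]
  refine ⟨?_, ?_⟩
  · rintro _ ⟨a, ha, rfl⟩
    exact hadj a ha
  · rintro _ ⟨a, ha, rfl⟩ _ ⟨b, hb, rfl⟩ hne v hva hvb
    rw [Sym2.mem_iff] at hva hvb
    have hab : a ≠ b := by rintro rfl; exact hne rfl
    rcases hva with rfl | rfl <;> rcases hvb with h | h
    · exact hab h
    · exact hfA b hb (h ▸ ha)
    · exact hfA a ha (h ▸ hb)
    · exact hab (hf ha hb h)

end Matching

theorem IsMatchingSet.card_le_of_forall_exists_mem {V : Type*} {G : SimpleGraph V}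
    {M : Finset (Sym2 V)} (hM : IsMatchingSet G M) {A : Finset V}
    (hcover : ∀ e ∈ G.edgeSet, ∃ a ∈ A, a ∈ e) : M.card ≤ A.card :=
  card_le_card_of_forall_subsingleton (fun e a => a ∈ e) (fun e he => hcover e (hM.1 e he))
    fun a _ e he f hf => by_contra fun hne => hM.2 e he.1 f hf.1 hne a he.2 hf.2

theorem tree_saturating_matching_general {V : Type*} [Fintype V] (G : SimpleGraph V)
    [DecidableRel G.Adj] (A B : Finset V)
    (hT : G.IsTree)
    (hpart : ∀ v : V, v ∈ A ↔ v ∉ B)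
    (hA : ∀ u ∈ A, ∀ v ∈ A, ¬ G.Adj u v)
    (hB : ∀ u ∈ B, ∀ v ∈ B, ¬ G.Adj u v)
    (hdeg : ∀ v ∈ A, 2 ≤ G.degree v) :
    ∃ M : Finset (Sym2 V), IsMatchingSet G M ∧ (∀ a ∈ A, ∃ e ∈ M, a ∈ e) ∧
      M.card = A.card ∧
      ∀ M' : Finset (Sym2 V), IsMatchingSet G M' → M'.card ≤ A.card := by
  classical
  obtain ⟨f, hadj, hinj⟩ := hT.exists_injOn_adj_of_one_lt_degree
  have hadjA : ∀ a ∈ A, G.Adj a (f a) := fun a ha => hadj a (hdeg a ha)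
  have hfA : ∀ a ∈ A, f a ∉ A := fun a ha hfa => hA a ha _ hfa (hadjA a ha)
  have hcover : ∀ e ∈ G.edgeSet, ∃ a ∈ A, a ∈ e := by
    rintro ⟨u, v⟩ huv
    by_contra! h
    have hmemB : ∀ w ∈ s(u, v), w ∈ B := fun w hw => by_contra fun hwB => h w ((hpart w).2 hwB) hw
    exact hB u (hmemB u (Sym2.mem_mk_left u v)) v (hmemB v (Sym2.mem_mk_right u v)) huv
  refine ⟨_, isMatchingSet_image_sym2_mk_of_injOn hadjA hfA (hinj.mono hdeg),
    fun a ha => ⟨_, mem_image_of_mem _ ha, Sym2.mem_mk_left a (f a)⟩,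
    card_image_sym2_mk_of_forall_notMem hfA, fun M' hM' => hM'.card_le_of_forall_exists_mem hcover⟩

theorem tree_saturating_matching {V : Type*} [Fintype V] [DecidableEq V] (G : SimpleGraph V)
    [DecidableRel G.Adj] (A B : Finset V)
    (hT : G.IsTree)
    (hpart : ∀ v : V, v ∈ A ↔ v ∉ B)
    (hA : ∀ u ∈ A, ∀ v ∈ A, ¬ G.Adj u v)
    (hB : ∀ u ∈ B, ∀ v ∈ B, ¬ G.Adj u v)
    (hdeg : ∀ v ∈ A, 2 ≤ G.degree v) :
    ∃ M : Finset (Sym2 V), IsMatchingSet G M ∧ (∀ a ∈ A, ∃ e ∈ M, a ∈ e) ∧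
      M.card = A.card ∧
      ∀ M' : Finset (Sym2 V), IsMatchingSet G M' → M'.card ≤ A.card :=
  tree_saturating_matching_general G A B hT hpart hA hB hdeg
end

section
/- Let T be a finite tree with bipartition (A, B) such that every vertex of A has degree at least 2. Then the minimum vertex cover of T has size exactly |A|. -/
/-!
Root the tree at any vertex `r`. A vertex `a ∈ A` of degree at least two has a neighbour other
than its parent, i.e. a child; choosing one child for each `a ∈ A` gives a matching saturating
`A`, since distinct vertices have distinct children. A vertex cover meets every edge of this
matching, so it has at least `|A|` vertices, while `A` itself is a cover because `B` is independent.
-/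

def IsVertexCover {V : Type*} (G : SimpleGraph V) (C : Finset V) : Prop :=
  ∀ e ∈ G.edgeSet, ∃ v ∈ C, v ∈ e

open Finset

theorem isVertexCover_iff_coe {V : Type*} {G : SimpleGraph V} {C : Finset V} :
    IsVertexCover G C ↔ G.IsVertexCover (C : Set V) := by
  simp [IsVertexCover, SimpleGraph.IsVertexCover, Sym2.forall, and_or_left, exists_or]

namespace SimpleGraph

variable {V : Type*} {G : SimpleGraph V}

theorem IsVertexCover.card_le_of_injOn {C s : Finset V} (hC : G.IsVertexCover C)
    {f : V → V} (hadj : ∀ a ∈ s, G.Adj a (f a)) (hout : ∀ a ∈ s, f a ∉ s)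
    (hf : Set.InjOn f s) : #s ≤ #C := by
  classical
  refine card_le_card_of_injOn (fun a => if a ∈ C then a else f a) (fun a ha => ?_) ?_
  · by_cases haC : a ∈ C
    · simp [haC]
    · simpa [haC] using (hC (hadj a ha)).resolve_left haC
  · intro a ha a' ha' h
    by_cases haC : a ∈ C <;> by_cases ha'C : a' ∈ C <;>
      simp only [haC, ha'C, if_true, if_false] at h
    · exact h
    · exact absurd (h ▸ ha) (hout a' ha')
    · exact absurd (h ▸ ha') (hout a ha)
    · exact hf ha ha' h

namespace IsTree

variable (hT : G.IsTree) (r : V)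

/-- The second vertex on the path from `v` to the root `r`, so that `parent r r = r`. -/
noncomputable def parent (v : V) : V :=
  (hT.existsUnique_path v r).exists.choose.getVert 1

theorem parent_eq_getVert_one {v : V} {p : G.Walk v r} (hp : p.IsPath) :
    hT.parent r v = p.getVert 1 := by
  have h := hT.existsUnique_path v r
  rw [parent, h.unique h.exists.choose_spec hp]

/-- If `b` lay on the path from `a` to `r`, that path would start with the edge `a b`; so it does
not, and prolonging it by `b a` gives the path from `b` to `r`. -/
theorem parent_eq_of_adj {a b : V} (hab : G.Adj a b) (hb : b ≠ hT.parent r a) :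
    hT.parent r b = a := by
  classical
  obtain ⟨p, hp, -⟩ := hT.existsUnique_path a r
  have hbp : b ∉ p.support := by
    intro hbs
    have hstep : p.takeUntil b hbs = Walk.cons hab Walk.nil :=
      (hT.existsUnique_path a b).unique (hp.takeUntil hbs) (by simp [hab.ne])
    refine hb ?_
    rw [hT.parent_eq_getVert_one r hp, ← p.take_spec hbs, hstep]
    simp
  rw [hT.parent_eq_getVert_one r (hp.cons hbp (h := hab.symm))]
  simp

theorem exists_adj_parent_eq_of_two_le_degree {a : V} [Fintype (G.neighborSet a)]
    (ha : 2 ≤ G.degree a) : ∃ b, G.Adj a b ∧ hT.parent r b = a := by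
  obtain ⟨b, hb, hne⟩ := exists_mem_ne (s := G.neighborFinset a)
    (by rwa [card_neighborFinset_eq_degree]) (hT.parent r a)
  rw [mem_neighborFinset] at hb
  exact ⟨b, hb, hT.parent_eq_of_adj r hb hne⟩

end IsTree

end SimpleGraph

theorem tree_cover_number {V : Type*} [Fintype V] [DecidableEq V] (G : SimpleGraph V)
    [DecidableRel G.Adj] (A B : Finset V)
    (hT : G.IsTree)
    (hpart : ∀ v : V, v ∈ A ↔ v ∉ B)
    (hA : ∀ u ∈ A, ∀ v ∈ A, ¬ G.Adj u v)
    (hB : ∀ u ∈ B, ∀ v ∈ B, ¬ G.Adj u v)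
    (hdeg : ∀ v ∈ A, 2 ≤ G.degree v) :
    (∃ C : Finset V, IsVertexCover G C ∧ C.card = A.card) ∧
      ∀ C : Finset V, IsVertexCover G C → A.card ≤ C.card := by
  have hAcompl : (A : Set V)ᶜ = B := by ext v; simp [hpart]
  have hAcover : G.IsVertexCover A := by
    rw [← SimpleGraph.isIndepSet_compl_iff_isVertexCover, hAcompl]
    exact fun u hu v hv _ => hB u hu v hv
  refine ⟨⟨A, isVertexCover_iff_coe.2 hAcover, rfl⟩, fun C hC => ?_⟩
  obtain ⟨r⟩ := hT.connected.nonempty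
  choose! child hchild using fun a (ha : a ∈ A) =>
    hT.exists_adj_parent_eq_of_two_le_degree r (hdeg a ha)
  exact (isVertexCover_iff_coe.1 hC).card_le_of_injOn (fun a ha => (hchild a ha).1)
    (fun a ha hca => hA a ha _ hca (hchild a ha).1)
    (Set.LeftInvOn.injOn fun a ha => (hchild a ha).2)
end

section
/- Let k ≥ 2 and let G be a graph whose vertex set is partitioned as V₀ ∪ V₁, write Gᵢ = G[Vᵢ] for the induced graphs, and suppose that G₀, G₁ and the bipartite graph between them satisfy: (1) each Gᵢ contains no kK₂ and no S_{k−ℓ} ∪ ℓK₂ for 0 ≤ ℓ ≤ k−2; (2) for every v ∈ Vᵢ, d_{Vᵢ}(v) + ν(G_{1−i}[N_{V_{1−i}}(v)]) ≤ k − 1; (3) for every v ∈ Vᵢ with d_{Vᵢ}(v) = k−1, the vertices of N_{V_{1−i}}(v) are isolated in G_{1−i}. Then e(G₀) + e(G₁) − (|V₀||V₁| − e(G[V₀,V₁])) ≤ (k−1)². -/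
def kMatching (k : ℕ) : SimpleGraph (Fin (2 * k)) :=
  SimpleGraph.fromRel (fun a b => (a : ℕ) / 2 = (b : ℕ) / 2)

def starGraph (m : ℕ) : SimpleGraph (Fin 1 ⊕ Fin m) := completeBipartiteGraph (Fin 1) (Fin m)

def disjUnionGraph {α β : Type*} (G : SimpleGraph α) (H : SimpleGraph β) : SimpleGraph (α ⊕ β) :=
  SimpleGraph.fromRel (fun x y => match x, y with
    | Sum.inl a, Sum.inl b => G.Adj a b
    | Sum.inr a, Sum.inr b => H.Adj a b
    | _, _ => False)

def ContainsCopyIn {α V : Type*} (H : SimpleGraph α) (G : SimpleGraph V) (s : Finset V) : Prop :=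
  ∃ f : α → V, Function.Injective f ∧ (∀ a, f a ∈ s) ∧ ∀ a b, H.Adj a b → G.Adj (f a) (f b)

set_option linter.unusedSectionVars false
set_option linter.deprecated false

namespace KL

open Finset

variable {V : Type*} [Fintype V] [DecidableEq V] (G : SimpleGraph V) [DecidableRel G.Adj]

/-- membership in a `Sym2` via its canonical representative -/
lemma sym2_out_spec (e : Sym2 V) : s((Quot.out e).1, (Quot.out e).2) = e := by
  show Quot.mk _ ((Quot.out e).1, (Quot.out e).2) = e
  rw [Prod.mk.eta]
  exact Quot.out_eq e

lemma mem_out_iff (e : Sym2 V) (v : V) :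
    v ∈ e ↔ v = (Quot.out e).1 ∨ v = (Quot.out e).2 := by
  conv_lhs => rw [← sym2_out_spec e]
  exact Sym2.mem_iff

/-- the graph `G` restricted to a finset `W` -/
def inW (W : Finset V) : SimpleGraph V where
  Adj a b := G.Adj a b ∧ a ∈ W ∧ b ∈ W
  symm := ⟨by rintro a b ⟨h, ha, hb⟩; exact ⟨h.symm, hb, ha⟩⟩
  loopless := ⟨by rintro a ⟨h, _⟩; exact G.loopless.irrefl a h⟩

instance (W : Finset V) : DecidableRel (inW G W).Adj := fun _ _ => instDecidableAnd

lemma inW_adj {W : Finset V} {a b : V} :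
    (inW G W).Adj a b ↔ G.Adj a b ∧ a ∈ W ∧ b ∈ W := Iff.rfl

lemma edgeSet_inW (W : Finset V) (e : Sym2 V) :
    e ∈ (inW G W).edgeSet ↔ e ∈ G.edgeSet ∧ ∀ v ∈ e, v ∈ W := by
  induction e using Sym2.ind with
  | _ a b =>
    simp only [SimpleGraph.mem_edgeSet, inW_adj, Sym2.mem_iff]
    constructor
    · rintro ⟨h, ha, hb⟩
      exact ⟨h, by rintro v (rfl | rfl) <;> assumption⟩
    · rintro ⟨h, hv⟩
      exact ⟨h, hv a (Or.inl rfl), hv b (Or.inr rfl)⟩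

lemma edgeFinset_inW (W : Finset V) :
    (inW G W).edgeFinset = G.edgeFinset.filter (fun e => ∀ v ∈ e, v ∈ W) := by
  ext e
  simp only [SimpleGraph.mem_edgeFinset, mem_filter, edgeSet_inW]

lemma degree_inW_of_mem {W : Finset V} {v : V} (hv : v ∈ W) :
    (inW G W).degree v = (W.filter (G.Adj v)).card := by
  rw [← SimpleGraph.card_neighborFinset_eq_degree]
  congr 1
  ext u
  simp only [SimpleGraph.mem_neighborFinset, inW_adj, mem_filter]
  tauto

lemma degree_inW_of_not_mem {W : Finset V} {v : V} (hv : v ∉ W) :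
    (inW G W).degree v = 0 := by
  rw [← SimpleGraph.card_neighborFinset_eq_degree, card_eq_zero]
  ext u
  simp only [SimpleGraph.mem_neighborFinset, inW_adj, Finset.notMem_empty, iff_false]
  tauto

/-- vertices covered by a matching -/
noncomputable def VMset (M : Finset (Sym2 V)) : Finset V :=
  M.biUnion (fun e => {(Quot.out e).1, (Quot.out e).2})

lemma mem_VMset {M : Finset (Sym2 V)} {v : V} :
    v ∈ VMset M ↔ ∃ e ∈ M, v ∈ e := by
  simp only [VMset, mem_biUnion, mem_insert, mem_singleton]
  constructor
  · rintro ⟨e, he, hv⟩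
    exact ⟨e, he, (mem_out_iff e v).2 hv⟩
  · rintro ⟨e, he, hv⟩
    exact ⟨e, he, (mem_out_iff e v).1 hv⟩

lemma card_VMset {G : SimpleGraph V} {M : Finset (Sym2 V)} (hM : IsMatchingSet G M) :
    (VMset M).card = 2 * M.card := by
  rw [VMset, card_biUnion]
  · rw [Finset.sum_congr rfl (fun e he => ?_), Finset.sum_const, smul_eq_mul, mul_comm]
    have hd : ¬ e.IsDiag := SimpleGraph.not_isDiag_of_mem_edgeSet _ (hM.1 e he)
    have : (Quot.out e).1 ≠ (Quot.out e).2 := by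
      intro h
      apply hd
      rw [← sym2_out_spec e, Sym2.mk_isDiag_iff]
      exact h
    rw [card_insert_of_notMem (by simpa using this), card_singleton]
  · intro e he f hf hef
    simp only [disjoint_left, mem_insert, mem_singleton]
    rintro v (rfl | rfl) hvf
    · exact hM.2 e he f hf hef _ ((mem_out_iff e _).2 (Or.inl rfl))
        ((mem_out_iff f _).2 (by simpa using hvf))
    · exact hM.2 e he f hf hef _ ((mem_out_iff e _).2 (Or.inr rfl))
        ((mem_out_iff f _).2 (by simpa using hvf))

/-- counting pairs in a filtered product, fiberwise over the first coordinate -/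
lemma card_product_filter {α β : Type*} [DecidableEq α] [DecidableEq β]
    (A : Finset α) (B : Finset β) (R : α → β → Prop) [∀ a, DecidablePred (R a)]
    [DecidablePred (fun p : α × β => R p.1 p.2)] :
    ((A ×ˢ B).filter (fun p => R p.1 p.2)).card = ∑ a ∈ A, (B.filter (R a)).card := by
  rw [Finset.card_eq_sum_card_fiberwise (f := Prod.fst) (t := A)
    (fun p hp => (mem_product.1 (mem_filter.1 hp).1).1)]
  refine Finset.sum_congr rfl (fun a ha => ?_)
  refine Finset.card_nbij' (i := Prod.snd) (j := fun b => (a, b)) ?_ ?_ ?_ ?_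
  · intro p hp
    have h1 := mem_filter.1 hp
    have h2 := mem_filter.1 h1.1
    exact mem_filter.2 ⟨(mem_product.1 h2.1).2, h1.2 ▸ h2.2⟩
  · intro b hb
    have h := mem_filter.1 hb
    exact mem_filter.2 ⟨mem_filter.2 ⟨mem_product.2 ⟨ha, h.1⟩, h.2⟩, rfl⟩
  · rintro ⟨p1, p2⟩ hp
    have h1 : p1 = a := (mem_filter.1 hp).2
    simp [h1]
  · intro b _
    rfl

lemma card_product_filter_swap {α β : Type*} [DecidableEq α] [DecidableEq β]
    (A : Finset α) (B : Finset β) (R : α → β → Prop)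
    [DecidablePred (fun p : α × β => R p.1 p.2)]
    [DecidablePred (fun p : β × α => R p.2 p.1)] :
    ((A ×ˢ B).filter (fun p => R p.1 p.2)).card
      = ((B ×ˢ A).filter (fun p => R p.2 p.1)).card := by
  refine Finset.card_nbij' (i := Prod.swap) (j := Prod.swap) ?_ ?_ ?_ ?_ <;>
  · intro p hp
    simp only [Finset.mem_coe, mem_filter, mem_product, Prod.fst_swap, Prod.snd_swap] at hp ⊢
    tauto


/-- enumeration of a finset of known cardinality -/
noncomputable def enum {α : Type*} (s : Finset α) {m : ℕ} (h : s.card = m) : Fin m → α :=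
  fun i => (s.equivFin.symm (Fin.cast h.symm i)).1

lemma enum_mem {α : Type*} (s : Finset α) {m : ℕ} (h : s.card = m) (i : Fin m) :
    enum s h i ∈ s := (s.equivFin.symm (Fin.cast h.symm i)).2

lemma enum_inj {α : Type*} (s : Finset α) {m : ℕ} (h : s.card = m) :
    Function.Injective (enum s h) := by
  intro a b hab
  have := s.equivFin.symm.injective (Subtype.ext hab)
  simpa [Fin.ext_iff] using congrArg Fin.val this

/-- Embed a finite matching (as a finset of disjoint edges) into the vertex type. -/
lemma matching_embed {G : SimpleGraph V} (S : Finset (Sym2 V)) (m : ℕ) (hcard : S.card = m)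
    (hedge : ∀ e ∈ S, e ∈ G.edgeSet)
    (hdisj : ∀ e ∈ S, ∀ f ∈ S, e ≠ f → ∀ v, v ∈ e → v ∉ f) :
    ∃ (E : Fin m → Sym2 V) (g : Fin (2 * m) → V),
      Function.Injective E ∧ (∀ i, E i ∈ S) ∧
      Function.Injective g ∧
      (∀ j : Fin (2 * m), g j ∈ E ⟨(j : ℕ) / 2, by omega⟩) ∧
      (∀ i j : Fin (2 * m), (i : ℕ) ≠ (j : ℕ) → (i : ℕ) / 2 = (j : ℕ) / 2 →
        G.Adj (g i) (g j)) := by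
  refine ⟨enum S hcard,
    fun j => if (j : ℕ) % 2 = 0 then (Quot.out (enum S hcard ⟨(j : ℕ) / 2, by omega⟩)).1
      else (Quot.out (enum S hcard ⟨(j : ℕ) / 2, by omega⟩)).2,
    enum_inj S hcard,
    enum_mem S hcard, ?_, ?_, ?_⟩
  case refine_2 =>
    intro j
    by_cases hj : (j : ℕ) % 2 = 0 <;>
      simp only [hj, if_true, if_false, reduceIte] <;>
      rw [mem_out_iff] <;> tauto
  case refine_3 =>
    intro i j hne hdiv
    have hpar : (i : ℕ) % 2 ≠ (j : ℕ) % 2 := by omega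
    set e := enum S hcard ⟨(i : ℕ) / 2, by omega⟩ with he
    have hadj : G.Adj (Quot.out e).1 (Quot.out e).2 := by
      rw [← SimpleGraph.mem_edgeSet, sym2_out_spec]
      exact hedge e (enum_mem S hcard _)
    have hji : (⟨(j : ℕ) / 2, by omega⟩ : Fin m) = ⟨(i : ℕ) / 2, by omega⟩ := by
      simp only [Fin.mk.injEq]; omega
    rcases Nat.mod_two_eq_zero_or_one (i : ℕ) with hi | hi
    · have hjm : (j : ℕ) % 2 ≠ 0 := by omega
      simp only [hi, hjm, if_true, if_false, reduceIte, hji, ← he]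
      exact hadj
    · have him : (i : ℕ) % 2 ≠ 0 := by omega
      have hjm : (j : ℕ) % 2 = 0 := by omega
      simp only [him, hjm, if_true, if_false, reduceIte, hji, ← he]
      exact hadj.symm
  case refine_1 =>
    intro a b hab
    by_contra hne
    have hne' : (a : ℕ) ≠ (b : ℕ) := fun h => hne (Fin.ext h)
    by_cases hdiv : (a : ℕ) / 2 = (b : ℕ) / 2
    · -- same edge: endpoints adjacent hence distinct
      have hpar : (a : ℕ) % 2 ≠ (b : ℕ) % 2 := by omega
      set e := enum S hcard ⟨(a : ℕ) / 2, by omega⟩ with he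
      have hadj : G.Adj (Quot.out e).1 (Quot.out e).2 := by
        rw [← SimpleGraph.mem_edgeSet, sym2_out_spec]
        exact hedge e (enum_mem S hcard _)
      have hba : (⟨(b : ℕ) / 2, by omega⟩ : Fin m) = ⟨(a : ℕ) / 2, by omega⟩ := by
        simp only [Fin.mk.injEq]; omega
      rcases Nat.mod_two_eq_zero_or_one (a : ℕ) with ha | ha
      · have hbm : (b : ℕ) % 2 ≠ 0 := by omega
        simp only [ha, hbm, if_true, if_false, reduceIte, hba, ← he] at hab
        exact hadj.ne hab
      · have ham : (a : ℕ) % 2 ≠ 0 := by omega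
        have hbm : (b : ℕ) % 2 = 0 := by omega
        simp only [ham, hbm, if_true, if_false, reduceIte, hba, ← he] at hab
        exact hadj.ne hab.symm
    · -- different edges: disjoint
      have hEne : enum S hcard ⟨(a : ℕ) / 2, by omega⟩ ≠ enum S hcard ⟨(b : ℕ) / 2, by omega⟩ := by
        intro h
        have := enum_inj S hcard h
        simp only [Fin.mk.injEq] at this
        exact hdiv this
      have hga : (if (a : ℕ) % 2 = 0 then (Quot.out (enum S hcard ⟨(a : ℕ) / 2, by omega⟩)).1
          else (Quot.out (enum S hcard ⟨(a : ℕ) / 2, by omega⟩)).2)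
          ∈ enum S hcard ⟨(a : ℕ) / 2, by omega⟩ := by
        by_cases hpa : (a : ℕ) % 2 = 0 <;> simp only [hpa, if_true, if_false, reduceIte] <;>
          rw [mem_out_iff] <;> tauto
      have hgb : (if (b : ℕ) % 2 = 0 then (Quot.out (enum S hcard ⟨(b : ℕ) / 2, by omega⟩)).1
          else (Quot.out (enum S hcard ⟨(b : ℕ) / 2, by omega⟩)).2)
          ∈ enum S hcard ⟨(b : ℕ) / 2, by omega⟩ := by
        by_cases hpb : (b : ℕ) % 2 = 0 <;> simp only [hpb, if_true, if_false, reduceIte] <;>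
          rw [mem_out_iff] <;> tauto
      simp only at hab
      rw [hab] at hga
      exact hdisj _ (enum_mem S hcard _) _ (enum_mem S hcard _) hEne _ hga hgb

/-- no `kK₂` in `W` bounds the size of matchings inside `W` -/
lemma matching_card_le {G : SimpleGraph V} (W : Finset V) (k : ℕ) (hk : 2 ≤ k)
    (hno : ¬ ContainsCopyIn (kMatching k) G W)
    (M : Finset (Sym2 V)) (hM : IsMatchingSet G M) (hMW : ∀ e ∈ M, ∀ v ∈ e, v ∈ W) :
    M.card ≤ k - 1 := by
  by_contra hcon
  have hge : k ≤ M.card := by omega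
  obtain ⟨S, hSsub, hScard⟩ := Finset.exists_subset_card_eq hge
  obtain ⟨E, g, hEinj, hES, hginj, hgmem, hgadj⟩ :=
    matching_embed (G := G) S k hScard (fun e he => hM.1 e (hSsub he))
      (fun e he f hf hef v hv => hM.2 e (hSsub he) f (hSsub hf) hef v hv)
  apply hno
  refine ⟨g, hginj, ?_, ?_⟩
  · intro j
    exact hMW _ (hSsub (hES _)) _ (hgmem j)
  · intro i j hadj
    rw [kMatching, SimpleGraph.fromRel_adj] at hadj
    obtain ⟨hne, hdiv⟩ := hadj
    have hne' : (i : ℕ) ≠ (j : ℕ) := fun h => hne (Fin.ext h)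
    rcases hdiv with h | h
    · exact hgadj i j hne' h
    · exact hgadj i j hne' h.symm

/-- the star ∪ matching bound: a matched vertex has few neighbours outside the matching -/
lemma star_matching {G : SimpleGraph V} (W : Finset V) (k : ℕ) (hk : 2 ≤ k)
    (h1W : ∀ ℓ ≤ k - 2, ¬ ContainsCopyIn (disjUnionGraph (starGraph (k - ℓ)) (kMatching ℓ)) G W)
    (M : Finset (Sym2 V)) (hM : IsMatchingSet G M) (hMW : ∀ e ∈ M, ∀ v ∈ e, v ∈ W)
    (hMK : M.card ≤ k - 1)
    (x : V) (e₀ : Sym2 V) (he₀ : e₀ ∈ M) (hx : x ∈ e₀)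
    (A : Finset V) (hA : ∀ v ∈ A, G.Adj x v ∧ v ∈ W ∧ ∀ e ∈ M, v ∉ e)
    (hAcard : A.card + 1 ≤ k - 1) :
    A.card + M.card ≤ k - 1 := by
  by_contra hcon
  have hge : k ≤ A.card + M.card := by omega
  set a := A.card with haa
  set ℓ := k - 1 - a with hℓdef
  have ha1 : 1 ≤ a := by omega
  have hℓ2 : ℓ ≤ k - 2 := by omega
  have hkl : k - ℓ = a + 1 := by omega
  set y := Sym2.Mem.other' hx with hydef
  have hy_e : y ∈ e₀ := Sym2.other_mem' hx
  have hxy : G.Adj x y := by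
    rw [← SimpleGraph.mem_edgeSet, Sym2.other_spec' hx]
    exact hM.1 e₀ he₀
  have hxW : x ∈ W := hMW e₀ he₀ x hx
  have hyW : y ∈ W := hMW e₀ he₀ y hy_e
  have hyA : y ∉ A := fun h => (hA y h).2.2 e₀ he₀ hy_e
  set L : Finset V := insert y A with hLdef
  have hL : L.card = k - ℓ := by
    rw [hLdef, Finset.card_insert_of_notMem hyA, hkl]
  -- choose ℓ further matching edges avoiding e₀
  have hMcard' : ℓ ≤ (M.erase e₀).card := by
    rw [Finset.card_erase_of_mem he₀]
    omega
  obtain ⟨S, hSsub, hScard⟩ := Finset.exists_subset_card_eq hMcard'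
  have hSM : ∀ e ∈ S, e ∈ M := fun e he => Finset.mem_of_mem_erase (hSsub he)
  have hSne : ∀ e ∈ S, e ≠ e₀ := fun e he => (Finset.mem_erase.1 (hSsub he)).1
  obtain ⟨E, g, hEinj, hES, hginj, hgmem, hgadj⟩ :=
    matching_embed (G := G) S ℓ hScard (fun e he => hM.1 e (hSM e he))
      (fun e he f hf hef v hv => hM.2 e (hSM e he) f (hSM f hf) hef v hv)
  -- properties of L
  have hLW : ∀ v ∈ L, v ∈ W := by
    intro v hv
    rcases Finset.mem_insert.1 hv with rfl | hv'
    · exact hyW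
    · exact (hA v hv').2.1
  have hLadj : ∀ v ∈ L, G.Adj x v := by
    intro v hv
    rcases Finset.mem_insert.1 hv with rfl | hv'
    · exact hxy
    · exact (hA v hv').1
  have hLnotS : ∀ v ∈ L, ∀ e ∈ S, v ∉ e := by
    intro v hv e he
    rcases Finset.mem_insert.1 hv with rfl | hv'
    · exact fun hve => hM.2 e₀ he₀ e (hSM e he) (fun h => hSne e he h.symm) y hy_e hve
    · exact (hA v hv').2.2 e (hSM e he)
  have hxnotS : ∀ e ∈ S, x ∉ e :=
    fun e he hxe => hM.2 e₀ he₀ e (hSM e he) (fun h => hSne e he h.symm) x hx hxe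
  have hgS : ∀ j : Fin (2 * ℓ), ∃ e ∈ S, g j ∈ e :=
    fun j => ⟨E ⟨(j : ℕ) / 2, by omega⟩, hES _, hgmem j⟩
  -- build the forbidden copy
  apply h1W ℓ hℓ2
  refine ⟨fun z => match z with
    | .inl (.inl _) => x
    | .inl (.inr i) => enum L hL i
    | .inr j => g j, ?_, ?_, ?_⟩
  · -- injective
    have key1 : ∀ i : Fin (k - ℓ), x ≠ enum L hL i := by
      intro i h
      have hmem := enum_mem L hL i
      rw [← h] at hmem
      rcases Finset.mem_insert.1 hmem with h' | h'
      · exact hxy.ne' h'.symm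
      · exact G.loopless.irrefl x (hA x h').1
    have key2 : ∀ j : Fin (2 * ℓ), x ≠ g j := by
      intro j h
      obtain ⟨e, he, hge⟩ := hgS j
      rw [← h] at hge
      exact hxnotS e he hge
    have key3 : ∀ (i : Fin (k - ℓ)) (j : Fin (2 * ℓ)), enum L hL i ≠ g j := by
      intro i j h
      obtain ⟨e, he, hge⟩ := hgS j
      rw [← h] at hge
      exact hLnotS _ (enum_mem L hL i) e he hge
    rintro ((u | i) | j) ((u' | i') | j') hzw <;> dsimp only at hzw
    · rw [Subsingleton.elim u u']
    · exact absurd hzw (key1 i')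
    · exact absurd hzw (key2 j')
    · exact absurd hzw.symm (key1 i)
    · rw [enum_inj L hL hzw]
    · exact absurd hzw (key3 i j')
    · exact absurd hzw.symm (key2 j)
    · exact absurd hzw.symm (key3 i' j)
    · rw [hginj hzw]
  · -- image in W
    rintro ((u | i) | j)
    · exact hxW
    · exact hLW _ (enum_mem L hL i)
    · obtain ⟨e, he, hge⟩ := hgS j
      exact hMW e (hSM e he) _ hge
  · -- adjacency
    rintro ((u | i) | j) ((u' | i') | j') hadj <;>
      rw [disjUnionGraph, SimpleGraph.fromRel_adj] at hadj <;>
      obtain ⟨hne, hrel⟩ := hadj <;> dsimp only at hrel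
    · -- inl inl vs inl inl : star adjacency between two left vertices: impossible
      exfalso
      rcases hrel with h | h <;> simp [starGraph, completeBipartiteGraph] at h
    · -- center vs leaf
      have : G.Adj x (enum L hL i') := hLadj _ (enum_mem L hL i')
      exact this
    · exfalso; rcases hrel with h | h <;> exact h
    · exact (hLadj _ (enum_mem L hL i)).symm
    · exfalso
      rcases hrel with h | h <;> simp [starGraph, completeBipartiteGraph] at h
    · exfalso; rcases hrel with h | h <;> exact h
    · exfalso; rcases hrel with h | h <;> exact h
    · exfalso; rcases hrel with h | h <;> exact h
    · -- matching part
      have hne' : (j : ℕ) ≠ (j' : ℕ) := by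
        intro h
        exact hne (congrArg Sum.inr (Fin.ext h))
      rcases hrel with h | h
      · rw [kMatching, SimpleGraph.fromRel_adj] at h
        rcases h.2 with h' | h'
        · exact hgadj j j' hne' h'
        · exact hgadj j j' hne' h'.symm
      · rw [kMatching, SimpleGraph.fromRel_adj] at h
        rcases h.2 with h' | h'
        · exact hgadj j j' hne' h'.symm
        · exact hgadj j j' hne' h'

lemma isMatchingSet_subset {G : SimpleGraph V} {M M₂ : Finset (Sym2 V)}
    (h : IsMatchingSet G M) (hsub : M₂ ⊆ M) : IsMatchingSet G M₂ :=
  ⟨fun e he => h.1 e (hsub he),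
   fun e he f hf hef v hv => h.2 e (hsub he) f (hsub hf) hef v hv⟩

lemma side (k : ℕ) (hk : 2 ≤ k) (W W' : Finset V)
    (h1W : ∀ ℓ ≤ k - 2, ¬ ContainsCopyIn (disjUnionGraph (starGraph (k - ℓ)) (kMatching ℓ)) G W)
    (h2W : ∀ v ∈ W, ∀ M : Finset (Sym2 V), IsMatchingSet G M →
        (∀ e ∈ M, ∀ u, u ∈ e → u ∈ W' ∧ G.Adj v u) →
        ((W.filter (G.Adj v)).card : ℤ) + M.card ≤ (k : ℤ) - 1)
    (M M' : Finset (Sym2 V))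
    (hM : IsMatchingSet G M) (hMW : ∀ e ∈ M, ∀ v ∈ e, v ∈ W)
    (hMmax : ∀ M₂ : Finset (Sym2 V), IsMatchingSet G M₂ →
      (∀ e ∈ M₂, ∀ v ∈ e, v ∈ W) → M₂.card ≤ M.card)
    (hMK : M.card ≤ k - 1)
    (hM' : IsMatchingSet G M') (hM'W : ∀ e ∈ M', ∀ v ∈ e, v ∈ W') :
    2 * (G.edgeFinset.filter (fun e => ∀ v ∈ e, v ∈ W)).card
      + 2 * M.card * (M.card + M'.card)
    ≤ 4 * M.card * (k - 1)
      + ∑ x ∈ VMset M, ((VMset M').filter (fun u => ¬ G.Adj x u)).card := by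
  classical
  have hVMW : VMset M ⊆ W := by
    intro v hv
    obtain ⟨e, he, hve⟩ := mem_VMset.1 hv
    exact hMW e he v hve
  -- independence of unmatched vertices
  have hind : ∀ u ∈ W, u ∉ VMset M → ∀ w ∈ W, w ∉ VMset M → ¬ G.Adj u w := by
    intro u hu hu' w hw hw' hadj
    have hnewmem : s(u, w) ∉ M := by
      intro h
      exact hu' (mem_VMset.2 ⟨s(u, w), h, Sym2.mem_mk_left u w⟩)
    have hM₂ : IsMatchingSet G (insert s(u, w) M) := by
      constructor
      · intro e he
        rcases Finset.mem_insert.1 he with rfl | he'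
        · exact G.mem_edgeSet.2 hadj
        · exact hM.1 e he'
      · intro e he f hf hef v hv
        rcases Finset.mem_insert.1 he with rfl | he' <;>
          rcases Finset.mem_insert.1 hf with rfl | hf'
        · exact absurd rfl hef
        · intro hvf
          rcases Sym2.mem_iff.1 hv with rfl | rfl
          · exact hu' (mem_VMset.2 ⟨f, hf', hvf⟩)
          · exact hw' (mem_VMset.2 ⟨f, hf', hvf⟩)
        · intro hvf
          rcases Sym2.mem_iff.1 hvf with rfl | rfl
          · exact hu' (mem_VMset.2 ⟨e, he', hv⟩)
          · exact hw' (mem_VMset.2 ⟨e, he', hv⟩)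
        · exact hM.2 e he' f hf' hef v hv
    have hM₂W : ∀ e ∈ insert s(u, w) M, ∀ v ∈ e, v ∈ W := by
      intro e he v hv
      rcases Finset.mem_insert.1 he with rfl | he'
      · rcases Sym2.mem_iff.1 hv with rfl | rfl <;> assumption
      · exact hMW e he' v hv
    have := hMmax _ hM₂ hM₂W
    rw [Finset.card_insert_of_notMem hnewmem] at this
    omega
  -- key per-vertex inequality
  have key : ∀ x ∈ VMset M,
      (W.filter (G.Adj x)).card + ((W \ VMset M).filter (G.Adj x)).card
        + (M.card + M'.card)
      ≤ 2 * (k - 1) + ((VMset M').filter (fun u => ¬ G.Adj x u)).card := by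
    intro x hx
    have hxW : x ∈ W := hVMW hx
    obtain ⟨e₀, he₀, hxe₀⟩ := mem_VMset.1 hx
    -- (3) h2 with the fully adjacent edges of M'
    set full := M'.filter (fun e => ∀ u ∈ e, G.Adj x u) with hfulldef
    have hfullM : IsMatchingSet G full :=
      isMatchingSet_subset hM' (Finset.filter_subset _ _)
    have hfullend : ∀ e ∈ full, ∀ u, u ∈ e → u ∈ W' ∧ G.Adj x u := by
      intro e he u hu
      have h1 := Finset.mem_filter.1 he
      exact ⟨hM'W e h1.1 u hu, h1.2 u hu⟩
    have h3 : (W.filter (G.Adj x)).card + full.card ≤ k - 1 := by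
      have := h2W x hxW full hfullM hfullend
      omega
    -- (4) M'.card ≤ full.card + miss
    have h4 : M'.card ≤ full.card + ((VMset M').filter (fun u => ¬ G.Adj x u)).card := by
      have hsplit : full.card + (M'.filter (fun e => ¬ ∀ u ∈ e, G.Adj x u)).card = M'.card :=
        Finset.card_filter_add_card_filter_not _
      have hle : (M'.filter (fun e => ¬ ∀ u ∈ e, G.Adj x u)).card
          ≤ ((VMset M').filter (fun u => ¬ G.Adj x u)).card := by
        have hwit : ∀ e ∈ M'.filter (fun e => ¬ ∀ u ∈ e, G.Adj x u),
            ∃ u, u ∈ e ∧ ¬ G.Adj x u := by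
          intro e he
          have := (Finset.mem_filter.1 he).2
          push_neg at this
          obtain ⟨u, hu1, hu2⟩ := this
          exact ⟨u, hu1, hu2⟩
        refine Finset.card_le_card_of_injOn
          (fun e => if h : ∃ u, u ∈ e ∧ ¬ G.Adj x u then h.choose else x) ?_ ?_
        · intro e he
          dsimp only
          rw [dif_pos (hwit e he)]
          have hspec := (hwit e he).choose_spec
          refine Finset.mem_filter.2 ⟨mem_VMset.2 ⟨e, (Finset.mem_filter.1 he).1, hspec.1⟩, hspec.2⟩
        · intro e he f hf hef
          simp only [Finset.coe_filter, Set.mem_setOf_eq] at he hf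
          dsimp only at hef
          rw [dif_pos (hwit e (Finset.mem_filter.2 he)), dif_pos (hwit f (Finset.mem_filter.2 hf))] at hef
          by_contra hne
          have hspec1 := (hwit e (Finset.mem_filter.2 he)).choose_spec
          have hspec2 := (hwit f (Finset.mem_filter.2 hf)).choose_spec
          exact hM'.2 e he.1 f hf.1 hne _ hspec1.1 (hef ▸ hspec2.1)
      omega
    -- (5) star ∪ matching bound
    set A := (W \ VMset M).filter (G.Adj x) with hAdef
    have hA : ∀ v ∈ A, G.Adj x v ∧ v ∈ W ∧ ∀ e ∈ M, v ∉ e := by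
      intro v hv
      have h1 := Finset.mem_filter.1 hv
      have h2 := Finset.mem_sdiff.1 h1.1
      exact ⟨h1.2, h2.1, fun e he hve => h2.2 (mem_VMset.2 ⟨e, he, hve⟩)⟩
    have hAcard : A.card + 1 ≤ k - 1 := by
      set y := Sym2.Mem.other' hxe₀ with hydef
      have hy_e : y ∈ e₀ := Sym2.other_mem' hxe₀
      have hxy : G.Adj x y := by
        rw [← SimpleGraph.mem_edgeSet, Sym2.other_spec' hxe₀]
        exact hM.1 e₀ he₀
      have hyW : y ∈ W := hMW e₀ he₀ y hy_e
      have hyA : y ∉ A := by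
        intro h
        exact (Finset.mem_sdiff.1 (Finset.mem_filter.1 h).1).2 (mem_VMset.2 ⟨e₀, he₀, hy_e⟩)
      have hsub : insert y A ⊆ W.filter (G.Adj x) := by
        intro v hv
        rcases Finset.mem_insert.1 hv with rfl | hv'
        · exact Finset.mem_filter.2 ⟨hyW, hxy⟩
        · have h1 := Finset.mem_filter.1 hv'
          exact Finset.mem_filter.2 ⟨(Finset.mem_sdiff.1 h1.1).1, h1.2⟩
      have := Finset.card_le_card hsub
      rw [Finset.card_insert_of_notMem hyA] at this
      omega
    have h5 : A.card + M.card ≤ k - 1 :=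
      star_matching W k hk h1W M hM hMW hMK x e₀ he₀ hxe₀ A hA hAcard
    omega
  -- sum the key inequality over VMset M
  have hcardVM : (VMset M).card = 2 * M.card := card_VMset hM
  have hsumkey := Finset.sum_le_sum key
  rw [Finset.sum_add_distrib, Finset.sum_add_distrib, Finset.sum_const, Finset.sum_add_distrib,
    Finset.sum_const, hcardVM, smul_eq_mul, smul_eq_mul] at hsumkey
  -- edge count via degree sum
  have hdeg : ∑ v : V, (inW G W).degree v
      = 2 * (G.edgeFinset.filter (fun e => ∀ v ∈ e, v ∈ W)).card := by
    rw [SimpleGraph.sum_degrees_eq_twice_card_edges, edgeFinset_inW]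
  have hsplit1 : ∑ v ∈ W, (inW G W).degree v + ∑ v ∈ Wᶜ, (inW G W).degree v
      = ∑ v : V, (inW G W).degree v := Finset.sum_add_sum_compl W _
  have hzero : ∑ v ∈ Wᶜ, (inW G W).degree v = 0 := by
    refine Finset.sum_eq_zero (fun v hv => ?_)
    exact degree_inW_of_not_mem G (Finset.mem_compl.1 hv)
  have hsplit2 : ∑ v ∈ W \ VMset M, (inW G W).degree v + ∑ v ∈ VMset M, (inW G W).degree v
      = ∑ v ∈ W, (inW G W).degree v := Finset.sum_sdiff hVMW
  have hdegVM : ∀ v ∈ VMset M, (inW G W).degree v = (W.filter (G.Adj v)).card := by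
    intro v hv
    exact degree_inW_of_mem G (hVMW hv)
  have hdegU : ∀ u ∈ W \ VMset M, (inW G W).degree u = ((VMset M).filter (G.Adj u)).card := by
    intro u hu
    have h1 := Finset.mem_sdiff.1 hu
    rw [degree_inW_of_mem G h1.1]
    congr 1
    ext w
    simp only [Finset.mem_filter]
    constructor
    · rintro ⟨hw, hadj⟩
      refine ⟨?_, hadj⟩
      by_contra hw'
      exact hind u h1.1 h1.2 w hw hw' hadj
    · rintro ⟨hw, hadj⟩
      exact ⟨hVMW hw, hadj⟩
  -- the bipartite double count between unmatched and matched vertices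
  have hswap : ∑ u ∈ W \ VMset M, ((VMset M).filter (G.Adj u)).card
      = ∑ x ∈ VMset M, ((W \ VMset M).filter (G.Adj x)).card := by
    rw [← card_product_filter (W \ VMset M) (VMset M) (fun u x => G.Adj u x),
      card_product_filter_swap (W \ VMset M) (VMset M) (fun u x => G.Adj u x),
      card_product_filter (VMset M) (W \ VMset M) (fun x u => G.Adj u x)]
    refine Finset.sum_congr rfl (fun x hx => ?_)
    congr 1
    ext u
    simp only [Finset.mem_filter]
    rw [G.adj_comm]
  rw [Finset.sum_congr rfl hdegU, hswap] at hsplit2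
  rw [Finset.sum_congr rfl hdegVM] at hsplit2
  have hmm1 : 2 * M.card * (2 * (k - 1)) = 4 * M.card * (k - 1) := by ring
  omega

end KL

section Main

open Finset KL

variable {V : Type*} [Fintype V] [DecidableEq V]

/-- cross edges counted as ordered pairs -/
lemma cross_count (G : SimpleGraph V) [DecidableRel G.Adj] (V0 V1 : Finset V)
    (hpart : ∀ v : V, v ∈ V0 ↔ v ∉ V1) :
    ((V0 ×ˢ V1).filter (fun p => G.Adj p.1 p.2)).card
      = (G.edgeFinset.filter
          (fun e => (∃ v ∈ e, v ∈ V0) ∧ ∃ v ∈ e, v ∈ V1)).card := by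
  refine Finset.card_bij (fun p _ => s(p.1, p.2)) ?_ ?_ ?_
  · rintro ⟨a, b⟩ hp
    have h1 := Finset.mem_filter.1 hp
    have h2 := Finset.mem_product.1 h1.1
    refine Finset.mem_filter.2 ⟨SimpleGraph.mem_edgeFinset.2 (G.mem_edgeSet.2 h1.2), ?_, ?_⟩
    · exact ⟨a, Sym2.mem_mk_left a b, h2.1⟩
    · exact ⟨b, Sym2.mem_mk_right a b, h2.2⟩
  · rintro ⟨a, b⟩ hp ⟨c, d⟩ hq hpq
    have h1 := Finset.mem_product.1 (Finset.mem_filter.1 hp).1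
    have h2 := Finset.mem_product.1 (Finset.mem_filter.1 hq).1
    rcases Sym2.eq_iff.1 hpq with ⟨rfl, rfl⟩ | ⟨rfl, rfl⟩
    · rfl
    · exact absurd h2.2 ((hpart a).1 h1.1)
  · intro e he
    have h1 := Finset.mem_filter.1 he
    have hadj := SimpleGraph.mem_edgeFinset.1 h1.1
    obtain ⟨⟨v1, hv1e, hv1⟩, ⟨v2, hv2e, hv2⟩⟩ := h1.2
    induction e using Sym2.ind with
    | _ a b =>
      have hab : G.Adj a b := G.mem_edgeSet.1 hadj
      by_cases ha : a ∈ V0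
      · have hb : b ∈ V1 := by
          rcases Sym2.mem_iff.1 hv2e with rfl | rfl
          · exact absurd hv2 ((hpart v2).1 ha)
          · exact hv2
        exact ⟨(a, b), Finset.mem_filter.2
          ⟨Finset.mem_product.2 ⟨ha, hb⟩, hab⟩, rfl⟩
      · have ha1 : a ∈ V1 := by
          by_contra h
          exact ha ((hpart a).2 h)
        have hb : b ∈ V0 := by
          rcases Sym2.mem_iff.1 hv1e with rfl | rfl
          · exact absurd hv1 ha
          · exact hv1
        exact ⟨(b, a), Finset.mem_filter.2
          ⟨Finset.mem_product.2 ⟨hb, ha1⟩, hab.symm⟩, Sym2.eq_swap⟩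

end Main

theorem key_lemma {V : Type*} [Fintype V] [DecidableEq V] (G : SimpleGraph V)
    [DecidableRel G.Adj] (k : ℕ) (hk : 2 ≤ k) (V0 V1 : Finset V)
    (hpart : ∀ v : V, v ∈ V0 ↔ v ∉ V1)
    (h1 : ∀ W : Finset V, (W = V0 ∨ W = V1) →
      ¬ ContainsCopyIn (kMatching k) G W ∧
      ∀ ℓ ≤ k - 2, ¬ ContainsCopyIn (disjUnionGraph (starGraph (k - ℓ)) (kMatching ℓ)) G W)
    (h2 : ∀ W W' : Finset V, ((W = V0 ∧ W' = V1) ∨ (W = V1 ∧ W' = V0)) →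
      ∀ v ∈ W, ∀ M : Finset (Sym2 V), IsMatchingSet G M →
        (∀ e ∈ M, ∀ u, u ∈ e → u ∈ W' ∧ G.Adj v u) →
        ((W.filter (G.Adj v)).card : ℤ) + M.card ≤ (k : ℤ) - 1)
    (h3 : ∀ W W' : Finset V, ((W = V0 ∧ W' = V1) ∨ (W = V1 ∧ W' = V0)) →
      ∀ v ∈ W, (W.filter (G.Adj v)).card = k - 1 →
        ∀ u ∈ W', G.Adj v u → ∀ w ∈ W', ¬ G.Adj u w) :
    (((G.edgeFinset.filter (fun e => ∀ v ∈ e, v ∈ V0)).card : ℤ) +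
      ((G.edgeFinset.filter (fun e => ∀ v ∈ e, v ∈ V1)).card : ℤ)) -
      ((V0.card : ℤ) * V1.card -
        ((G.edgeFinset.filter
            (fun e => (∃ v ∈ e, v ∈ V0) ∧ ∃ v ∈ e, v ∈ V1)).card : ℤ)) ≤
      ((k : ℤ) - 1) ^ 2 := by
    classical
  obtain ⟨M₀, hM₀mem, hM₀max'⟩ := Finset.exists_max_image
    (Finset.univ.filter (fun M : Finset (Sym2 V) =>
      IsMatchingSet G M ∧ ∀ e ∈ M, ∀ v ∈ e, v ∈ V0)) Finset.card
    ⟨∅, Finset.mem_filter.2 ⟨Finset.mem_univ _,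
      ⟨fun e he => absurd he (Finset.notMem_empty e),
       fun e he => absurd he (Finset.notMem_empty e)⟩,
      fun e he => absurd he (Finset.notMem_empty e)⟩⟩
  obtain ⟨M₁, hM₁mem, hM₁max'⟩ := Finset.exists_max_image
    (Finset.univ.filter (fun M : Finset (Sym2 V) =>
      IsMatchingSet G M ∧ ∀ e ∈ M, ∀ v ∈ e, v ∈ V1)) Finset.card
    ⟨∅, Finset.mem_filter.2 ⟨Finset.mem_univ _,
      ⟨fun e he => absurd he (Finset.notMem_empty e),
       fun e he => absurd he (Finset.notMem_empty e)⟩,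
      fun e he => absurd he (Finset.notMem_empty e)⟩⟩
  obtain ⟨hM₀, hM₀V⟩ := (Finset.mem_filter.1 hM₀mem).2
  obtain ⟨hM₁, hM₁V⟩ := (Finset.mem_filter.1 hM₁mem).2
  have hM₀max : ∀ M₂ : Finset (Sym2 V), IsMatchingSet G M₂ →
      (∀ e ∈ M₂, ∀ v ∈ e, v ∈ V0) → M₂.card ≤ M₀.card :=
    fun M₂ h1' h2' => hM₀max' M₂ (Finset.mem_filter.2 ⟨Finset.mem_univ _, h1', h2'⟩)
  have hM₁max : ∀ M₂ : Finset (Sym2 V), IsMatchingSet G M₂ →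
      (∀ e ∈ M₂, ∀ v ∈ e, v ∈ V1) → M₂.card ≤ M₁.card :=
    fun M₂ h1' h2' => hM₁max' M₂ (Finset.mem_filter.2 ⟨Finset.mem_univ _, h1', h2'⟩)
  have hM₀K : M₀.card ≤ k - 1 :=
    KL.matching_card_le V0 k hk (h1 V0 (Or.inl rfl)).1 M₀ hM₀ hM₀V
  have hM₁K : M₁.card ≤ k - 1 :=
    KL.matching_card_le V1 k hk (h1 V1 (Or.inr rfl)).1 M₁ hM₁ hM₁V
  have hside₀ := KL.side G k hk V0 V1 (h1 V0 (Or.inl rfl)).2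
    (fun v hv => h2 V0 V1 (Or.inl ⟨rfl, rfl⟩) v hv)
    M₀ M₁ hM₀ hM₀V hM₀max hM₀K hM₁ hM₁V
  have hside₁ := KL.side G k hk V1 V0 (h1 V1 (Or.inr rfl)).2
    (fun v hv => h2 V1 V0 (Or.inr ⟨rfl, rfl⟩) v hv)
    M₁ M₀ hM₁ hM₁V hM₁max hM₁K hM₀ hM₀V
  set P : ℕ := ((KL.VMset M₀ ×ˢ KL.VMset M₁).filter
    (fun p => ¬ G.Adj p.1 p.2)).card with hPdef
  have hS₀ : ∑ x ∈ KL.VMset M₀, ((KL.VMset M₁).filter (fun u => ¬ G.Adj x u)).card = P := by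
    rw [hPdef, KL.card_product_filter (KL.VMset M₀) (KL.VMset M₁) (fun x u => ¬ G.Adj x u)]
  have hS₁ : ∑ x ∈ KL.VMset M₁, ((KL.VMset M₀).filter (fun u => ¬ G.Adj x u)).card = P := by
    rw [hPdef, KL.card_product_filter_swap (KL.VMset M₀) (KL.VMset M₁) (fun x u => ¬ G.Adj x u),
      KL.card_product_filter (KL.VMset M₁) (KL.VMset M₀) (fun u x => ¬ G.Adj x u)]
    refine Finset.sum_congr rfl (fun x hx => ?_)
    congr 1
    ext u
    simp only [Finset.mem_filter]
    rw [G.adj_comm]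
  rw [hS₀] at hside₀
  rw [hS₁] at hside₁
  have hVM₀V : KL.VMset M₀ ⊆ V0 := by
    intro v hv
    obtain ⟨e, he, hve⟩ := KL.mem_VMset.1 hv
    exact hM₀V e he v hve
  have hVM₁V : KL.VMset M₁ ⊆ V1 := by
    intro v hv
    obtain ⟨e, he, hve⟩ := KL.mem_VMset.1 hv
    exact hM₁V e he v hve
  set NN : ℕ := ((V0 ×ˢ V1).filter (fun p => ¬ G.Adj p.1 p.2)).card with hNNdef
  have hPNN : P ≤ NN := by
    rw [hPdef, hNNdef]
    exact Finset.card_le_card (Finset.filter_subset_filter _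
      (Finset.product_subset_product hVM₀V hVM₁V))
  have hCA : ((V0 ×ˢ V1).filter (fun p => G.Adj p.1 p.2)).card
      = (G.edgeFinset.filter
          (fun e => (∃ v ∈ e, v ∈ V0) ∧ ∃ v ∈ e, v ∈ V1)).card :=
    cross_count G V0 V1 hpart
  have hsplitNN : ((V0 ×ˢ V1).filter (fun p => G.Adj p.1 p.2)).card + NN
      = V0.card * V1.card := by
    rw [hNNdef, Finset.card_filter_add_card_filter_not, Finset.card_product]
  have hk1 : (1 : ℕ) ≤ k := by omega
  have hcast : ((k - 1 : ℕ) : ℤ) = (k : ℤ) - 1 := by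
    push_cast [Nat.cast_sub hk1]
    ring
  zify [hcast] at hside₀ hside₁ hPNN hsplitNN hCA
  rw [hCA] at hsplitNN
  nlinarith [sq_nonneg ((k : ℤ) - 1 - (M₀.card + M₁.card)), hside₀, hside₁, hPNN, hsplitNN]
end
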